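/- arXiv:2204.05955 — 3 statements merged into one kernel-verified Lean document; each statement's English description precedes it below -/
import Mathlib

section
/- Suppose (symmetric QSP existence in W-convention): for every real polynomial F of degree d with parity d mod 2 and |F(x)| ≤ 1 on [-1,1], there exist real polynomials G, Q and symmetric phases (φ₀,...,φ₀) ∈ ℝ^{d+1} such that e^{iφ₀Z}∏_{j=1}^d [W(x)e^{iφ_jZ}] has top-left entry F(x)+iG(x) and off-diagonal entries iQ(x)√(1-x²). Then for every real even polynomial F of degree d with |F(x)| ≤ 1 on [-1,1], there exist real polynomials G, Q and symmetric phases (φ₀,φ₁,...,φ₁,φ₀) ∈ ℝ^{d+1} such that U_Φ(x) = e^{iφ₀X}W_z*(x)e^{iφ₁X}W_z(x)···W_z(x)e^{iφ₀X} has both diagonal entries equal to F(x), top-right entry -Q(x)√(1-x²)+iG(x), and bottom-left entry Q(x)√(1-x²)+iG(x). -/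
open Matrix Complex

/-- The QSP signal matrix `W(x) = e^{i·arccos(x)·X}`. -/
noncomputable def Wmat (x : ℝ) : Matrix (Fin 2) (Fin 2) ℂ :=
  !![(x : ℂ), Complex.I * (Real.sqrt (1 - x ^ 2) : ℝ);
     Complex.I * (Real.sqrt (1 - x ^ 2) : ℝ), (x : ℂ)]

/-- `W_z(x) = e^{i·arccos(x)·Z}`. -/
noncomputable def Wz (x : ℝ) : Matrix (Fin 2) (Fin 2) ℂ :=
  !![Complex.exp (Complex.I * (Real.arccos x : ℝ)), 0;
     0, Complex.exp (-(Complex.I * (Real.arccos x : ℝ)))]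

/-- `e^{iφZ}`. -/
noncomputable def expZ (φ : ℝ) : Matrix (Fin 2) (Fin 2) ℂ :=
  !![Complex.exp (Complex.I * (φ : ℝ)), 0; 0, Complex.exp (-(Complex.I * (φ : ℝ)))]

/-- `e^{iφX} = cos φ · I + i sin φ · X`. -/
noncomputable def expX (φ : ℝ) : Matrix (Fin 2) (Fin 2) ℂ :=
  !![(Real.cos φ : ℝ), Complex.I * (Real.sin φ : ℝ);
     Complex.I * (Real.sin φ : ℝ), (Real.cos φ : ℝ)]

/-- The QSP product in the `W`-convention:
`e^{iφ₀Z} ∏_{j=1}^d [W(x) e^{iφ_jZ}]`. -/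
noncomputable def qspW (d : ℕ) (φ : Fin (d + 1) → ℝ) (x : ℝ) : Matrix (Fin 2) (Fin 2) ℂ :=
  expZ (φ 0) * (List.ofFn fun j : Fin d => Wmat x * expZ (φ j.succ)).prod

/-- The QET-U product in the `W_z`-convention:
`e^{iφ₀X} W_z*(x) e^{iφ₁X} W_z(x) e^{iφ₂X} ⋯ e^{iφ_{d-1}X} W_z(x) e^{iφ_dX}`,
where `W_z*` occurs at the odd positions and `W_z` at the even positions. -/
noncomputable def qspWz (d : ℕ) (φ : Fin (d + 1) → ℝ) (x : ℝ) : Matrix (Fin 2) (Fin 2) ℂ :=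
  expX (φ 0) *
    (List.ofFn fun j : Fin d =>
      (if (j : ℕ) % 2 = 0 then (Wz x).map (starRingEnd ℂ) else Wz x) * expX (φ j.succ)).prod

/-!
Conjugation by the rotation `rotZX` sends `e^{iφZ}` to `e^{iφX}` and `W(x)` to `W_z*(x)`, so it
turns the `W`-convention product into an `X`-rotation product all of whose signal factors are
`W_z*`. Adding `π/2` to a phase inserts a factor `e^{iπX/2} = iX`; since `X W_z X = W_z*`, these
factors can be pushed to the right end, flipping every other `W_z*` into `W_z` and leaving
`(iX)^d = (-1)^{d/2}`. The remaining `π/4` at the two ends conjugate by `e^{iπX/4}`, which turns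
`Z` into `Y` and so moves the `√(1-x²)` part onto the off-diagonal with the required signs.
An even `F` has even degree, and the sign `(-1)^{d/2}` is absorbed by applying the hypothesis to
`(-1)^{d/2} F`.
-/

open Real

theorem expX_add (a b : ℝ) : expX (a + b) = expX a * expX b := by
  ext i j
  fin_cases i <;> fin_cases j <;>
    simp [expX, Matrix.mul_apply, Fin.sum_univ_two, Real.cos_add, Real.sin_add] <;>
    ring_nf <;> simp [I_sq] <;> ring

theorem expX_pi : expX π = -1 := by
  ext i j
  fin_cases i <;> fin_cases j <;> simp [expX]

theorem expX_commute (a b : ℝ) : Commute (expX a) (expX b) := by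
  rw [Commute, SemiconjBy, ← expX_add, ← expX_add, add_comm]

theorem expX_pi_div_two_pow_two_mul (m : ℕ) : expX (π / 2) ^ (2 * m) = (-1) ^ m := by
  rw [pow_mul, sq, ← expX_add, add_halves, expX_pi]

theorem expZ_eq_cos_sin (t : ℝ) :
    expZ t = !![(Real.cos t : ℂ) + I * (Real.sin t : ℝ), 0;
      0, (Real.cos t : ℂ) - I * (Real.sin t : ℝ)] := by
  rw [expZ, mul_comm, Complex.exp_mul_I, neg_mul_eq_neg_mul, ← Complex.ofReal_neg,
    Complex.exp_mul_I]
  simp [sub_eq_add_neg, mul_comm]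

theorem expZ_map_conj (t : ℝ) : (expZ t).map (starRingEnd ℂ) = expZ (-t) := by
  ext i j
  fin_cases i <;> fin_cases j <;> simp [expZ, ← Complex.exp_conj]

theorem expX_pi_div_two_mul_expZ (t : ℝ) :
    expX (π / 2) * expZ t = expZ (-t) * expX (π / 2) := by
  ext i j
  fin_cases i <;> fin_cases j <;> simp [expX, expZ, Matrix.mul_apply, Fin.sum_univ_two, mul_comm]

theorem Wz_eq_expZ (x : ℝ) : Wz x = expZ (arccos x) := rfl

theorem Wmat_eq_expX {x : ℝ} (hx : x ∈ Set.Icc (-1 : ℝ) 1) : Wmat x = expX (arccos x) := by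
  rw [Wmat, expX, cos_arccos hx.1 hx.2, sin_arccos]

/-- `√2 · e^{-iπY/4}`: conjugation by it maps `Z ↦ X` and `X ↦ -Z`. -/
noncomputable def rotZX : (Matrix (Fin 2) (Fin 2) ℂ)ˣ where
  val := !![1, -1; 1, 1]
  inv := !![1 / 2, 1 / 2; -1 / 2, 1 / 2]
  val_inv := by ext i j; fin_cases i <;> fin_cases j <;> norm_num [Matrix.mul_apply]
  inv_val := by ext i j; fin_cases i <;> fin_cases j <;> norm_num [Matrix.mul_apply]

theorem rotZX_smul_expZ (t : ℝ) : ConjAct.toConjAct rotZX • expZ t = expX t := by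
  rw [expZ_eq_cos_sin, ConjAct.units_smul_def]
  ext i j
  fin_cases i <;> fin_cases j <;> simp [rotZX, expX, Matrix.mul_apply, Fin.sum_univ_two] <;> ring

theorem rotZX_smul_expX (t : ℝ) : ConjAct.toConjAct rotZX • expX t = expZ (-t) := by
  rw [expZ_eq_cos_sin, ConjAct.units_smul_def]
  ext i j
  fin_cases i <;> fin_cases j <;> simp [rotZX, expX, Matrix.mul_apply, Fin.sum_univ_two] <;> ring

section Alternating
variable {M : Type*} [Monoid M] {a b p : M}

theorem pow_mul_alternating (hb : p * b = a * p) (ha : p * a = b * p) (d : ℕ) :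
    p ^ d * (if d % 2 = 0 then a else b) = a * p ^ d := by
  induction d with
  | zero => simp
  | succ d ih =>
    have hstep : p * (if (d + 1) % 2 = 0 then a else b) = (if d % 2 = 0 then a else b) * p := by
      rcases Nat.mod_two_eq_zero_or_one d with h | h
      · simp [h, Nat.succ_mod_two_eq_one_iff.mpr h, hb]
      · simp [h, Nat.succ_mod_two_eq_zero_iff.mpr h, ha]
    rw [pow_succ, mul_assoc, hstep, ← mul_assoc, ih, mul_assoc]

theorem prod_ofFn_alternating_mul (hb : p * b = a * p) (ha : p * a = b * p) {d : ℕ}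
    (c : Fin d → M) (hc : ∀ j, Commute p (c j)) :
    (List.ofFn fun j : Fin d => (if (j : ℕ) % 2 = 0 then a else b) * (p * c j)).prod
      = (List.ofFn fun j : Fin d => a * c j).prod * p ^ d := by
  induction d with
  | zero => simp
  | succ d ih =>
    rw [List.ofFn_succ', List.ofFn_succ', List.prod_concat, List.prod_concat]
    simp only [Fin.val_castSucc, Fin.val_last]
    rw [ih _ fun j => hc _, mul_assoc, ← mul_assoc (p ^ d), pow_mul_alternating hb ha,
      mul_assoc a, ← mul_assoc (p ^ d), ← pow_succ, ((hc _).pow_left _).eq]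
    simp only [mul_assoc]

end Alternating

-- The paper's shift `(2 - δ_{j0})π/4` with `j` counted from the nearer end; for `d = 0` both
-- end corrections apply and the single phase is left unchanged.
noncomputable def phaseShift (d j : ℕ) : ℝ :=
  π / 2 - (if j = 0 then π / 4 else 0) - (if j = d then π / 4 else 0)

theorem phaseShift_rev {d : ℕ} (j : Fin (d + 1)) : phaseShift d j.rev = phaseShift d j := by
  have := j.isLt
  simp only [phaseShift, Fin.val_rev]
  split_ifs <;> first | omega | ring

theorem qspWz_add_phaseShift (d : ℕ) (φ : Fin (d + 1) → ℝ) (x : ℝ) :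
    qspWz d (fun j => φ j + phaseShift d j) x
      = expX (π / 4) * (expX (φ 0) * (List.ofFn fun j : Fin d =>
          (if (j : ℕ) % 2 = 0 then (Wz x).map (starRingEnd ℂ) else Wz x) *
            (expX (π / 2) * expX (φ j.succ))).prod) * expX (-(π / 4)) := by
  cases d with
  | zero =>
    simp only [qspWz, List.ofFn_zero, List.prod_nil, mul_one, ← expX_add, phaseShift]
    congr 1
    simp only [Fin.val_zero, if_true]
    ring
  | succ n =>
    have hfirst : expX (φ 0 + phaseShift (n + 1) 0) = expX (π / 4) * expX (φ 0) := by
      rw [← expX_add, phaseShift, if_pos rfl, if_neg (by omega)]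
      ring_nf
    have hmid (i : Fin n) : expX (φ i.castSucc.succ + phaseShift (n + 1) (i + 1))
        = expX (π / 2) * expX (φ i.castSucc.succ) := by
      rw [← expX_add, phaseShift, if_neg (by omega), if_neg (by omega)]
      ring_nf
    have hlast : expX (φ (Fin.last n).succ + phaseShift (n + 1) (n + 1))
        = expX (π / 2) * expX (φ (Fin.last n).succ) * expX (-(π / 4)) := by
      rw [← expX_add, ← expX_add, phaseShift, if_neg (by omega), if_pos rfl]
      ring_nf
    simp only [qspWz, List.ofFn_succ', List.prod_concat, Fin.val_zero, Fin.val_succ,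
      Fin.val_castSucc, Fin.val_last, hfirst, hmid, hlast]
    simp only [mul_assoc]

theorem rotZX_smul_qspW {x : ℝ} (hx : x ∈ Set.Icc (-1 : ℝ) 1) (d : ℕ) (φ : Fin (d + 1) → ℝ) :
    ConjAct.toConjAct rotZX • qspW d φ x
      = expX (φ 0) * (List.ofFn fun j : Fin d =>
          (Wz x).map (starRingEnd ℂ) * expX (φ j.succ)).prod := by
  simp only [qspW, smul_mul', List.smul_prod', List.map_ofFn, Function.comp_def, rotZX_smul_expZ,
    Wmat_eq_expX hx, rotZX_smul_expX, Wz_eq_expZ, expZ_map_conj]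

theorem qspWz_add_phaseShift_eq_smul {x : ℝ} (hx : x ∈ Set.Icc (-1 : ℝ) 1) (m : ℕ)
    (φ : Fin (2 * m + 1) → ℝ) :
    qspWz (2 * m) (fun j => φ j + phaseShift (2 * m) j) x
      = (-1 : ℂ) ^ m • (expX (π / 4) * (ConjAct.toConjAct rotZX • qspW (2 * m) φ x)
          * expX (-(π / 4))) := by
  have hWz : expX (π / 2) * Wz x = (Wz x).map (starRingEnd ℂ) * expX (π / 2) := by
    rw [Wz_eq_expZ, expZ_map_conj, expX_pi_div_two_mul_expZ]
  have hWz' : expX (π / 2) * (Wz x).map (starRingEnd ℂ) = Wz x * expX (π / 2) := by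
    rw [Wz_eq_expZ, expZ_map_conj, expX_pi_div_two_mul_expZ, neg_neg]
  rw [qspWz_add_phaseShift, prod_ofFn_alternating_mul hWz hWz' (fun j => expX (φ j.succ))
    (fun _ => expX_commute _ _), ← mul_assoc (expX (φ 0)), ← rotZX_smul_qspW hx,
    expX_pi_div_two_pow_two_mul,
    ← neg_one_smul ℂ (1 : Matrix (Fin 2) (Fin 2) ℂ), smul_pow, one_pow, mul_smul_comm, mul_one,
    mul_smul_comm, smul_mul_assoc]

theorem expX_pi_div_four_mul_rotZX_smul_mul (f g q s : ℝ) :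
    expX (π / 4) * (ConjAct.toConjAct rotZX •
        !![(f : ℂ) + I * (g : ℂ), I * q * s; I * q * s, f - I * g]) * expX (-(π / 4))
      = !![(f : ℂ), -(q * s) + I * g; q * s + I * g, f] := by
  have h2 : ((√2 : ℝ) : ℂ) ^ 2 = 2 := by norm_cast; simp
  rw [ConjAct.units_smul_def]
  ext i j
  fin_cases i <;> fin_cases j <;>
    simp [rotZX, expX, Matrix.mul_apply, Fin.sum_univ_two, cos_pi_div_four, sin_pi_div_four] <;>
    ring_nf <;> simp [h2, I_sq] <;> ring

theorem even_natDegree_of_eval_neg {F : Polynomial ℝ} (heven : ∀ x, F.eval (-x) = F.eval x) :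
    Even F.natDegree := by
  by_contra hodd
  rw [Nat.not_even_iff_odd] at hodd
  have hcomp : F.comp (-Polynomial.X) = F := Polynomial.funext fun x => by simp [heven]
  have hlc := congrArg Polynomial.leadingCoeff hcomp
  rw [Polynomial.comp_neg_X_leadingCoeff_eq, hodd.neg_one_pow, neg_one_mul, neg_eq_iff_add_eq_zero,
    ← two_mul, mul_eq_zero, Polynomial.leadingCoeff_eq_zero] at hlc
  rcases hlc with h | rfl
  · norm_num at h
  · simp at hodd

/-- Assuming symmetric QSP existence in the `W`-convention, one obtains symmetric QSP
in the `W_z`-convention with real polynomial target `F` on both diagonal entries. -/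
theorem stmt4
    (hQSP : ∀ (d : ℕ) (F : Polynomial ℝ), F.natDegree = d →
      (∀ x : ℝ, F.eval (-x) = (-1 : ℝ) ^ d * F.eval x) →
      (∀ x ∈ Set.Icc (-1 : ℝ) 1, |F.eval x| ≤ 1) →
      ∃ (G Q : Polynomial ℝ) (φ : Fin (d + 1) → ℝ),
        (∀ j : Fin (d + 1), φ j = φ j.rev) ∧
        ∀ x ∈ Set.Icc (-1 : ℝ) 1,
          qspW d φ x =
            !![(F.eval x : ℝ) + Complex.I * (G.eval x : ℝ),
                Complex.I * (Q.eval x : ℝ) * (Real.sqrt (1 - x ^ 2) : ℝ);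
               Complex.I * (Q.eval x : ℝ) * (Real.sqrt (1 - x ^ 2) : ℝ),
                (F.eval x : ℝ) - Complex.I * (G.eval x : ℝ)]) :
    ∀ (d : ℕ) (F : Polynomial ℝ), F.natDegree = d →
      (∀ x : ℝ, F.eval (-x) = F.eval x) →
      (∀ x ∈ Set.Icc (-1 : ℝ) 1, |F.eval x| ≤ 1) →
      ∃ (G Q : Polynomial ℝ) (φ : Fin (d + 1) → ℝ),
        (∀ j : Fin (d + 1), φ j = φ j.rev) ∧
        ∀ x ∈ Set.Icc (-1 : ℝ) 1,
          qspWz d φ x =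
            !![((F.eval x : ℝ) : ℂ),
                -((Q.eval x : ℝ) * (Real.sqrt (1 - x ^ 2) : ℝ)) + Complex.I * (G.eval x : ℝ);
               (Q.eval x : ℝ) * (Real.sqrt (1 - x ^ 2) : ℝ) + Complex.I * (G.eval x : ℝ),
                ((F.eval x : ℝ) : ℂ)] := by
  intro d F hdeg heven hbound
  obtain ⟨m, rfl⟩ : ∃ m, d = 2 * m := (hdeg ▸ even_natDegree_of_eval_neg heven).two_dvd
  obtain ⟨G, Q, φ, hsym, hφ⟩ := hQSP (2 * m) (Polynomial.C ((-1) ^ m) * F)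
    (by rw [Polynomial.natDegree_C_mul (by positivity), hdeg])
    (fun x => by simp [heven x, pow_mul])
    (fun x hx => by simpa using hbound x hx)
  refine ⟨Polynomial.C ((-1) ^ m) * G, Polynomial.C ((-1) ^ m) * Q,
    fun j => φ j + phaseShift (2 * m) j, fun j => by dsimp only; rw [hsym j, phaseShift_rev],
    fun x hx => ?_⟩
  rw [qspWz_add_phaseShift_eq_smul hx, hφ x hx, expX_pi_div_four_mul_rotZX_smul_mul]
  ext i j
  fin_cases i <;> fin_cases j <;> simp [← mul_assoc, ← mul_pow] <;> ring
end

section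
/- For the n-qubit transverse field Ising Hamiltonian H_TFIM = -∑_{j=1}^{n-1} Z_j Z_{j+1} - g∑_{j=1}^{n} X_j, the Pauli string K = Y₁⊗Z₂⊗Y₃⊗Z₄⊗··· (alternating Y on odd sites and Z on even sites) anti-commutes with both the ZZ part and the X part of the Hamiltonian: K(∑ Z_jZ_{j+1})K = -∑ Z_jZ_{j+1} and K(∑ X_j)K = -∑ X_j. -/
open Matrix Finset

/-- Pauli matrices. -/
def pauliX : Matrix (Fin 2) (Fin 2) ℂ := !![0, 1; 1, 0]
def pauliY : Matrix (Fin 2) (Fin 2) ℂ := !![0, -Complex.I; Complex.I, 0]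
def pauliZ : Matrix (Fin 2) (Fin 2) ℂ := !![1, 0; 0, -1]

/-- Tensor (Kronecker) product of `n` single-qubit matrices, as an operator on
`(Fin n → Fin 2)`-indexed qubit configurations. -/
def kron (n : ℕ) (M : Fin n → Matrix (Fin 2) (Fin 2) ℂ) :
    Matrix (Fin n → Fin 2) (Fin n → Fin 2) ℂ :=
  fun f g => ∏ j, M j (f j) (g j)

/-- The single-qubit matrix `M` acting on site `j` (identity elsewhere). -/
def siteOp (n : ℕ) (j : Fin n) (M : Matrix (Fin 2) (Fin 2) ℂ) :
    Matrix (Fin n → Fin 2) (Fin n → Fin 2) ℂ :=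
  kron n fun k => if k = j then M else 1

/-- `Z_j Z_{j+1}` on an `(m+1)`-site chain, for a bond `j : Fin m`. -/
def zzTerm (m : ℕ) (j : Fin m) :
    Matrix (Fin (m + 1) → Fin 2) (Fin (m + 1) → Fin 2) ℂ :=
  kron (m + 1) fun k => if k = j.castSucc then pauliZ else if k = j.succ then pauliZ else 1

/-- The Pauli string `K = Y₁⊗Z₂⊗Y₃⊗Z₄⊗⋯` (Y on odd sites, Z on even sites,
with 1-based labels; in 0-based indices, Y at even indices and Z at odd indices). -/
def Kstring (n : ℕ) : Matrix (Fin n → Fin 2) (Fin n → Fin 2) ℂ :=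
  kron n fun k => if (k : ℕ) % 2 = 0 then pauliY else pauliZ

lemma YZY : pauliY * pauliZ * pauliY = -pauliZ := by
  ext i j; fin_cases i <;> fin_cases j <;>
    simp [pauliY, pauliZ, Matrix.mul_apply, Fin.sum_univ_two]

lemma ZZZ : pauliZ * pauliZ * pauliZ = pauliZ := by
  ext i j; fin_cases i <;> fin_cases j <;>
    simp [pauliZ, Matrix.mul_apply, Fin.sum_univ_two]

lemma YXY : pauliY * pauliX * pauliY = -pauliX := by
  ext i j; fin_cases i <;> fin_cases j <;>
    simp [pauliX, pauliY, Matrix.mul_apply, Fin.sum_univ_two]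

lemma ZXZ : pauliZ * pauliX * pauliZ = -pauliX := by
  ext i j; fin_cases i <;> fin_cases j <;>
    simp [pauliX, pauliZ, Matrix.mul_apply, Fin.sum_univ_two]

lemma YY : pauliY * pauliY = 1 := by
  ext i j; fin_cases i <;> fin_cases j <;>
    simp [pauliY, Matrix.mul_apply, Fin.sum_univ_two, Matrix.one_apply]

lemma ZZ1 : pauliZ * pauliZ = 1 := by
  ext i j; fin_cases i <;> fin_cases j <;>
    simp [pauliZ, Matrix.mul_apply, Fin.sum_univ_two, Matrix.one_apply]

lemma kron_mul (n : ℕ) (M N : Fin n → Matrix (Fin 2) (Fin 2) ℂ) :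
    kron n M * kron n N = kron n fun j => M j * N j := by
  ext f g
  simp only [kron, Matrix.mul_apply, ← Finset.prod_mul_distrib]
  rw [Finset.prod_univ_sum]
  simp [Fintype.piFinset_univ]

lemma kron_neg_single (n : ℕ) (M N : Fin n → Matrix (Fin 2) (Fin 2) ℂ) (i₀ : Fin n)
    (h1 : N i₀ = -M i₀) (h2 : ∀ k, k ≠ i₀ → N k = M k) :
    kron n N = -kron n M := by
  ext f g
  simp only [kron, Matrix.neg_apply]
  rw [← Finset.mul_prod_erase _ _ (Finset.mem_univ i₀),
      ← Finset.mul_prod_erase _ (fun j => M j (f j) (g j)) (Finset.mem_univ i₀)]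
  rw [h1]
  have : ∀ k ∈ Finset.univ.erase i₀, N k (f k) (g k) = M k (f k) (g k) := by
    intro k hk
    rw [h2 k (Finset.mem_erase.mp hk).1]
  rw [Finset.prod_congr rfl this]
  simp [Matrix.neg_apply]

lemma anticomm_X (n : ℕ) (j : Fin n) :
    Kstring n * siteOp n j pauliX * Kstring n = -(siteOp n j pauliX) := by
  unfold Kstring siteOp
  rw [kron_mul, kron_mul]
  apply kron_neg_single _ _ _ j
  · simp only [if_pos rfl]
    split_ifs
    · exact YXY
    · exact ZXZ
  · intro k hk
    simp only [if_neg hk]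
    split_ifs
    · rw [mul_one, YY]
    · rw [mul_one, ZZ1]

lemma anticomm_ZZ (m : ℕ) (j : Fin m) :
    Kstring (m + 1) * zzTerm m j * Kstring (m + 1) = -(zzTerm m j) := by
  have hne : j.castSucc ≠ j.succ := by
    simp [Fin.ext_iff]
  unfold Kstring zzTerm
  rw [kron_mul, kron_mul]
  rcases Nat.mod_two_eq_zero_or_one (j : ℕ) with hp | hp
  · apply kron_neg_single _ _ _ j.castSucc
    · simp only [if_pos rfl, Fin.coe_castSucc, hp, if_pos rfl]
      exact YZY
    · intro k hk
      by_cases hk2 : k = j.succ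
      · subst hk2
        have h1 : ((j.succ : Fin (m+1)) : ℕ) % 2 = 1 := by
          simp only [Fin.val_succ]; omega
        simp only [if_neg hk, if_pos rfl, h1]
        norm_num
        exact ZZZ
      · simp only [if_neg hk, if_neg hk2, mul_one]
        split_ifs
        · exact YY
        · exact ZZ1
  · apply kron_neg_single _ _ _ j.succ
    · have h1 : ((j.succ : Fin (m+1)) : ℕ) % 2 = 0 := by
        simp only [Fin.val_succ]; omega
      simp only [if_neg hne.symm, if_pos rfl, h1]
      exact YZY
    · intro k hk
      by_cases hk2 : k = j.castSucc
      · subst hk2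
        have h1 : ((j.castSucc : Fin (m+1)) : ℕ) % 2 = 1 := by
          simp only [Fin.coe_castSucc]; omega
        simp only [if_pos rfl, h1]
        norm_num
        exact ZZZ
      · simp only [if_neg hk2, if_neg hk, mul_one]
        split_ifs
        · exact YY
        · exact ZZ1

/-- For the TFIM Hamiltonian `H = -∑ Z_jZ_{j+1} - g∑ X_j` on `n = m+1` sites, the
alternating Pauli string `K` anti-commutes with both the ZZ part and the X part. -/
theorem stmt7 (m : ℕ) (g : ℝ) :
    Kstring (m + 1) * (∑ j : Fin m, zzTerm m j) * Kstring (m + 1) =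
        -(∑ j : Fin m, zzTerm m j) ∧
      Kstring (m + 1) * (∑ j : Fin (m + 1), siteOp (m + 1) j pauliX) * Kstring (m + 1) =
        -(∑ j : Fin (m + 1), siteOp (m + 1) j pauliX) := by
  constructor
  · rw [Finset.mul_sum, Finset.sum_mul]
    rw [← Finset.sum_neg_distrib]
    exact Finset.sum_congr rfl fun j _ => anticomm_ZZ m j
  · rw [Finset.mul_sum, Finset.sum_mul, ← Finset.sum_neg_distrib]
    exact Finset.sum_congr rfl fun j _ => anticomm_X (m + 1) j
end

section
/- For the n-qubit Heisenberg Hamiltonian components H⁽¹⁾ = -∑_{j=1}^{n-1}(J_x X_jX_{j+1} + J_y Y_jY_{j+1}) and H⁽²⁾ = -∑_{j=1}^{n-1} J_z Z_jZ_{j+1}, the Pauli strings K₁ = Z₁⊗I₂⊗Z₃⊗I₄⊗··· and K₂ = X₁⊗I₂⊗X₃⊗I₄⊗··· satisfy K₁H⁽¹⁾K₁ = -H⁽¹⁾ and K₂H⁽²⁾K₂ = -H⁽²⁾. -/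
open Matrix Finset

/-- `P_j P_{j+1}` (the same single-qubit Pauli `P` on both endpoints of bond `j`)
on an `(m+1)`-site chain. -/
def bondTerm (m : ℕ) (P : Matrix (Fin 2) (Fin 2) ℂ) (j : Fin m) :
    Matrix (Fin (m + 1) → Fin 2) (Fin (m + 1) → Fin 2) ℂ :=
  kron (m + 1) fun k => if k = j.castSucc then P else if k = j.succ then P else 1

/-- Heisenberg component `H⁽¹⁾ = -∑_j (J_x X_jX_{j+1} + J_y Y_jY_{j+1})`. -/
noncomputable def heisH1 (m : ℕ) (Jx Jy : ℝ) :
    Matrix (Fin (m + 1) → Fin 2) (Fin (m + 1) → Fin 2) ℂ :=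
  -(∑ j : Fin m, ((Jx : ℂ) • bondTerm m pauliX j + (Jy : ℂ) • bondTerm m pauliY j))

/-- Heisenberg component `H⁽²⁾ = -∑_j J_z Z_jZ_{j+1}`. -/
noncomputable def heisH2 (m : ℕ) (Jz : ℝ) :
    Matrix (Fin (m + 1) → Fin 2) (Fin (m + 1) → Fin 2) ℂ :=
  -(∑ j : Fin m, (Jz : ℂ) • bondTerm m pauliZ j)

/-- `K₁ = Z₁⊗I₂⊗Z₃⊗⋯` (Z on odd sites, 1-based; i.e. at even 0-based indices). -/
def K1string (n : ℕ) : Matrix (Fin n → Fin 2) (Fin n → Fin 2) ℂ :=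
  kron n fun k => if (k : ℕ) % 2 = 0 then pauliZ else 1

/-- `K₂ = X₁⊗I₂⊗X₃⊗⋯` (X on odd sites, 1-based). -/
def K2string (n : ℕ) : Matrix (Fin n → Fin 2) (Fin n → Fin 2) ℂ :=
  kron n fun k => if (k : ℕ) % 2 = 0 then pauliX else 1

lemma kron_neg_at (n : ℕ) (M N : Fin n → Matrix (Fin 2) (Fin 2) ℂ) (j0 : Fin n)
    (h0 : M j0 = -N j0) (h : ∀ k, k ≠ j0 → M k = N k) :
    kron n M = -kron n N := by
  ext f g
  show (∏ j, M j (f j) (g j)) = -(∏ j, N j (f j) (g j))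
  rw [← Finset.mul_prod_erase univ (fun j => M j (f j) (g j)) (mem_univ j0),
      ← Finset.mul_prod_erase univ (fun j => N j (f j) (g j)) (mem_univ j0), h0]
  rw [Finset.prod_congr rfl fun k hk => by
    rw [h k (Finset.ne_of_mem_erase hk)]]
  simp only [Matrix.neg_apply]
  ring

lemma conj_bond (m : ℕ) (P Q : Matrix (Fin 2) (Fin 2) ℂ)
    (hQQ : Q * Q = 1) (hQPQ : Q * P * Q = -P) (j : Fin m) :
    kron (m + 1) (fun k => if (k : ℕ) % 2 = 0 then Q else 1) * bondTerm m P j *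
      kron (m + 1) (fun k => if (k : ℕ) % 2 = 0 then Q else 1) = -bondTerm m P j := by
  simp only [bondTerm]
  rw [kron_mul, kron_mul]
  set j0 : Fin (m + 1) := if (j : ℕ) % 2 = 0 then j.castSucc else j.succ with hj0
  apply kron_neg_at (m + 1) _ _ j0
  · have hcs : ((j.castSucc : Fin (m+1)) : ℕ) = (j : ℕ) := rfl
    have hs : ((j.succ : Fin (m+1)) : ℕ) = (j : ℕ) + 1 := rfl
    have hne : j.castSucc ≠ j.succ := by
      intro hh
      have := congrArg (fun x : Fin (m+1) => (x : ℕ)) hh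
      simp [hcs, hs] at this
    by_cases hp : (j : ℕ) % 2 = 0
    · simp only [hj0, if_pos hp]
      simp [bondTerm, hcs, hp, hQPQ]
    · simp only [hj0, if_neg hp]
      have hsp : ((j : ℕ) + 1) % 2 = 0 := by omega
      simp [bondTerm, hs, hsp, hne.symm, Matrix.one_mul, Matrix.mul_one, hQPQ]
  · intro k hk
    have hcs : ((j.castSucc : Fin (m+1)) : ℕ) = (j : ℕ) := rfl
    have hs : ((j.succ : Fin (m+1)) : ℕ) = (j : ℕ) + 1 := rfl
    by_cases h1 : k = j.castSucc
    · -- then since k ≠ j0, we must have j odd, so k has odd index: factor is 1*P*1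
      have hp : ¬ (j : ℕ) % 2 = 0 := by
        intro hp; apply hk; rw [hj0, if_pos hp, h1]
      simp [bondTerm, h1, hcs, hp]
    · by_cases h2 : k = j.succ
      · have hp : (j : ℕ) % 2 = 0 := by
          by_contra hp; apply hk; rw [hj0, if_neg hp, h2]
        have hsp : ¬ ((j : ℕ) + 1) % 2 = 0 := by omega
        simp [bondTerm, h1, h2, hs, hsp]
      · by_cases hk2 : (k : ℕ) % 2 = 0 <;>
          simp [bondTerm, h1, h2, hk2, hQQ]

/-- For the Heisenberg model, `K₁H⁽¹⁾K₁ = -H⁽¹⁾` and `K₂H⁽²⁾K₂ = -H⁽²⁾`. -/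
theorem stmt8 (m : ℕ) (Jx Jy Jz : ℝ) :
    K1string (m + 1) * heisH1 m Jx Jy * K1string (m + 1) = -heisH1 m Jx Jy ∧
      K2string (m + 1) * heisH2 m Jz * K2string (m + 1) = -heisH2 m Jz := by
  have hZZ : pauliZ * pauliZ = 1 := by
    simp [pauliZ, Matrix.mul_fin_two, Matrix.one_fin_two]
  have hXX : pauliX * pauliX = 1 := by
    simp [pauliX, Matrix.mul_fin_two, Matrix.one_fin_two]
  have hZXZ : pauliZ * pauliX * pauliZ = -pauliX := by
    simp [pauliZ, pauliX, Matrix.mul_fin_two]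
  have hZYZ : pauliZ * pauliY * pauliZ = -pauliY := by
    simp [pauliZ, pauliY, Matrix.mul_fin_two]
  have hXZX : pauliX * pauliZ * pauliX = -pauliZ := by
    simp [pauliX, pauliZ, Matrix.mul_fin_two]
  have hS1 : K1string (m + 1) *
      (∑ j : Fin m, ((Jx : ℂ) • bondTerm m pauliX j + (Jy : ℂ) • bondTerm m pauliY j)) *
      K1string (m + 1) =
      -(∑ j : Fin m, ((Jx : ℂ) • bondTerm m pauliX j + (Jy : ℂ) • bondTerm m pauliY j)) := by
    rw [Matrix.mul_sum, Matrix.sum_mul, ← Finset.sum_neg_distrib]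
    refine Finset.sum_congr rfl fun j _ => ?_
    have h1 := conj_bond m pauliX pauliZ hZZ hZXZ j
    have h2 := conj_bond m pauliY pauliZ hZZ hZYZ j
    simp only [K1string] at *
    rw [Matrix.mul_add, Matrix.add_mul, Matrix.mul_smul, Matrix.smul_mul,
        Matrix.mul_smul, Matrix.smul_mul, h1, h2, smul_neg, smul_neg, neg_add]
  have hS2 : K2string (m + 1) * (∑ j : Fin m, (Jz : ℂ) • bondTerm m pauliZ j) *
      K2string (m + 1) = -(∑ j : Fin m, (Jz : ℂ) • bondTerm m pauliZ j) := by
    rw [Matrix.mul_sum, Matrix.sum_mul, ← Finset.sum_neg_distrib]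
    refine Finset.sum_congr rfl fun j _ => ?_
    have h1 := conj_bond m pauliZ pauliX hXX hXZX j
    simp only [K2string] at *
    rw [Matrix.mul_smul, Matrix.smul_mul, h1, smul_neg]
  constructor
  · simp only [heisH1, Matrix.mul_neg, Matrix.neg_mul, hS1, neg_neg]
  · simp only [heisH2, Matrix.mul_neg, Matrix.neg_mul, hS2, neg_neg]
end
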